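/- Let X be a countable subshift over a finite alphabet A and let c ∈ X be at level 1. Suppose that every pattern appearing in c appears at infinitely many positions in c. Then there exist configurations y, y' ∈ X with y ≺ c and y' ≺ c, a nonzero vector w ∈ ℤ×ℤ, and integers t₀ ≤ t₁ such that c(u) = y(u) for every u ∈ ℤ×ℤ with ⟨u,w⟩ ≥ t₁ and c(u) = y'(u) for every u ∈ ℤ×ℤ with ⟨u,w⟩ ≤ t₀, where ⟨u,w⟩ denotes the standard dot product on ℤ×ℤ. That is, c agrees on two disjoint half-planes with configurations strictly below it. -/

import Mathlib

set_option linter.unusedSectionVars false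
set_option maxHeartbeats 1000000

namespace CountableSubshift

/-- A configuration over alphabet `A` on the plane `ℤ × ℤ`. -/
abbrev Config (A : Type*) := ℤ × ℤ → A

variable {A : Type*}

/-- The shift by a vector `v`. -/
def shift (v : ℤ × ℤ) (x : Config A) : Config A := fun u => x (u + v)

/-- The shift-orbit of a configuration. -/
def orbit (x : Config A) : Set (Config A) := Set.range fun v => shift v x

variable [TopologicalSpace A]

/-- `Preceq x y` iff `x` belongs to the closure of the shift-orbit of `y`. -/
def Preceq (x y : Config A) : Prop := x ∈ closure (orbit y)

/-- Strict version of `Preceq`. -/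
def Prec (x y : Config A) : Prop := Preceq x y ∧ ¬ Preceq y x

/-- `x ≈ y` : mutual `Preceq`. -/
def OrbEquiv (x y : Config A) : Prop := Preceq x y ∧ Preceq y x

/-- A subshift: nonempty, closed and shift-invariant set of configurations. -/
def IsSubshift (X : Set (Config A)) : Prop :=
  X.Nonempty ∧ IsClosed X ∧ ∀ v : ℤ × ℤ, shift v '' X = X

/-- A configuration is periodic if it has two linearly independent vectors of periodicity. -/
def Periodic (x : Config A) : Prop :=
  ∃ v w : ℤ × ℤ, shift v x = x ∧ shift w x = x ∧ LinearIndependent ℤ ![v, w]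

/-- `x` is at level 0 in `X`: it is `Preceq`-minimal in `X`. -/
def Level0 (X : Set (Config A)) (x : Config A) : Prop :=
  x ∈ X ∧ ∀ y ∈ X, Preceq y x → Preceq x y

/-- `x` is at level 1 in `X`. -/
def Level1 (X : Set (Config A)) (x : Config A) : Prop :=
  x ∈ X ∧ ¬ Level0 X x ∧ ∀ y ∈ X, Prec y x → Level0 X y

/-- `x` is at level 2 in `X`. -/
def Level2 (X : Set (Config A)) (x : Config A) : Prop :=
  x ∈ X ∧ ¬ Level0 X x ∧ ¬ Level1 X x ∧ ∀ y ∈ X, Prec y x → Level0 X y ∨ Level1 X y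

/-- The pattern `p` with (finite) domain `D` appears in `x` at position `u`. -/
def AppearsAt (D : Finset (ℤ × ℤ)) (p : ℤ × ℤ → A) (x : Config A) (u : ℤ × ℤ) : Prop :=
  ∀ d ∈ D, x (u + d) = p d

/-- A subshift of finite type: the nonempty set of configurations avoiding a
finite family of forbidden patterns. -/
def IsSFT (X : Set (Config A)) : Prop :=
  X.Nonempty ∧ ∃ (n : ℕ) (D : Fin n → Finset (ℤ × ℤ)) (p : Fin n → ℤ × ℤ → A),
    X = {x : Config A | ∀ (i : Fin n) (u : ℤ × ℤ), ¬ AppearsAt (D i) (p i) x u}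

/-- Every pattern appearing in `c` appears at infinitely many positions. -/
def AllPatternsInfinite (c : Config A) : Prop :=
  ∀ (D : Finset (ℤ × ℤ)) (u : ℤ × ℤ),
    {u' : ℤ × ℤ | ∀ d ∈ D, c (u' + d) = c (u + d)}.Infinite

/-- The standard dot product on `ℤ × ℤ`. -/
def dot (u w : ℤ × ℤ) : ℤ := u.1 * w.1 + u.2 * w.2

/-! ### Auxiliary lemmas: basic shift algebra -/

lemma shift_apply (v : ℤ × ℤ) (x : Config A) (u : ℤ × ℤ) : shift v x u = x (u + v) := rfl

lemma shift_shift (u v : ℤ × ℤ) (x : Config A) :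
    shift u (shift v x) = shift (u + v) x := by
  funext z; simp [shift, add_assoc]

lemma shift_zero (x : Config A) : shift 0 x = x := by funext z; simp [shift]

lemma mem_orbit (v : ℤ × ℤ) (x : Config A) : shift v x ∈ orbit x := ⟨v, rfl⟩

lemma eq_shift_neg {x y : Config A} {v : ℤ × ℤ} (h : shift v x = y) : x = shift (-v) y := by
  rw [← h, shift_shift, neg_add_cancel, shift_zero]

/-- Iterated periods: if `p` is a period then so is every multiple. -/
lemma per_add {x : Config A} {a b : ℤ × ℤ} (ha : shift a x = x) (hb : shift b x = x) :
    shift (a + b) x = x := by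
  rw [← shift_shift, hb, ha]

lemma per_neg {x : Config A} {a : ℤ × ℤ} (ha : shift a x = x) : shift (-a) x = x := by
  conv_lhs => rw [← ha]
  rw [shift_shift, neg_add_cancel, shift_zero]

lemma per_zsmul {x : Config A} {a : ℤ × ℤ} (ha : shift a x = x) (k : ℤ) :
    shift (k • a) x = x := by
  induction k using Int.induction_on with
  | zero => simpa using shift_zero x
  | succ n ih => rw [add_smul, one_smul]; exact per_add ih ha
  | pred n ih => rw [sub_smul, one_smul, sub_eq_add_neg]; exact per_add ih (per_neg ha)

lemma per_apply {x : Config A} {a : ℤ × ℤ} (ha : shift a x = x) (u : ℤ × ℤ) :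
    x (u + a) = x u := by
  conv_rhs => rw [← ha]
  rfl

section Discrete
variable [DiscreteTopology A] [Fintype A]

/-- Closure membership in the product of discrete spaces, via finite windows. -/
lemma mem_closure_iff_finset {S : Set (Config A)} {x : Config A} :
    x ∈ closure S ↔ ∀ D : Finset (ℤ × ℤ), ∃ s ∈ S, ∀ u ∈ D, s u = x u := by
  constructor
  · intro hx D
    have hU : IsOpen {z : Config A | ∀ u ∈ D, z u = x u} := by
      have : {z : Config A | ∀ u ∈ D, z u = x u} = ⋂ u ∈ D, (fun z : Config A => z u) ⁻¹' {x u} := by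
        ext z; simp
      rw [this]
      exact isOpen_biInter_finset fun u _ =>
        (continuous_apply u).isOpen_preimage _ (isOpen_discrete _)
    have hmem : x ∈ {z : Config A | ∀ u ∈ D, z u = x u} := fun u _ => rfl
    rcases mem_closure_iff.1 hx _ hU hmem with ⟨s, hs1, hs2⟩
    exact ⟨s, hs2, hs1⟩
  · intro h
    rw [mem_closure_iff]
    intro o ho hxo
    rcases isOpen_pi_iff.1 ho x hxo with ⟨I, U, hIU, hsub⟩
    rcases h I with ⟨s, hsS, hs⟩
    refine ⟨s, hsub fun i hi => ?_, hsS⟩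
    rw [hs i (by simpa using hi)]
    exact (hIU i (by simpa using hi)).2

/-- The pattern characterization of `Preceq`. -/
lemma preceq_iff {x y : Config A} :
    Preceq x y ↔ ∀ D : Finset (ℤ × ℤ), ∃ v : ℤ × ℤ, ∀ u ∈ D, y (u + v) = x u := by
  unfold Preceq
  rw [mem_closure_iff_finset]
  constructor
  · intro h D
    rcases h D with ⟨s, ⟨v, rfl⟩, hs⟩
    exact ⟨v, hs⟩
  · intro h D
    rcases h D with ⟨v, hv⟩
    exact ⟨shift v y, mem_orbit v y, hv⟩

lemma preceq_refl (x : Config A) : Preceq x x :=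
  preceq_iff.2 fun _ => ⟨0, fun u _ => by simp⟩

lemma preceq_trans {x y z : Config A} (h1 : Preceq x y) (h2 : Preceq y z) : Preceq x z := by
  rw [preceq_iff] at *
  intro D
  rcases h1 D with ⟨v, hv⟩
  rcases h2 (D.image (· + v)) with ⟨v', hv'⟩
  refine ⟨v + v', fun u hu => ?_⟩
  have := hv' (u + v) (Finset.mem_image_of_mem _ hu)
  rw [← hv u hu, ← this, add_assoc]

lemma preceq_shift_left {x y : Config A} (v : ℤ × ℤ) (h : Preceq x y) :
    Preceq (shift v x) y := by
  rw [preceq_iff] at *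
  intro D
  rcases h (D.image (· + v)) with ⟨v', hv'⟩
  refine ⟨v + v', fun u hu => ?_⟩
  have := hv' (u + v) (Finset.mem_image_of_mem _ hu)
  rw [shift_apply, ← this, add_assoc]

lemma shift_preceq (v : ℤ × ℤ) (y : Config A) : Preceq (shift v y) y :=
  preceq_shift_left v (preceq_refl y)

lemma preceq_of_eq_shift {x y : Config A} {v : ℤ × ℤ} (h : x = shift v y) : Preceq x y := by
  subst h; exact shift_preceq v y

/-- Membership in a subshift is downward closed under `Preceq`. -/
lemma mem_of_preceq {X : Set (Config A)} (hX : IsSubshift X) {c x : Config A}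
    (hc : c ∈ X) (h : Preceq x c) : x ∈ X := by
  have horb : orbit c ⊆ X := by
    rintro - ⟨v, rfl⟩
    rw [← hX.2.2 v]
    exact ⟨c, hc, rfl⟩
  have := closure_mono horb h
  rwa [hX.2.1.closure_eq] at this

/-- Sequential compactness of the configuration space. -/
lemma seq_limit (f : ℕ → Config A) :
    ∃ (y : Config A) (φ : ℕ → ℕ), StrictMono φ ∧
      ∀ u : ℤ × ℤ, ∃ N : ℕ, ∀ k ≥ N, f (φ k) u = y u := by
  have hcs : IsCompact (Set.univ : Set (Config A)) := isCompact_univ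
  rcases hcs.tendsto_subseq (x := f) (fun _ => Set.mem_univ _) with ⟨y, -, φ, hφ, hconv⟩
  refine ⟨y, φ, hφ, fun u => ?_⟩
  have h1 : Filter.Tendsto (fun k => f (φ k) u) Filter.atTop (nhds (y u)) :=
    (tendsto_pi_nhds.1 hconv) u
  rw [nhds_discrete] at h1
  rcases (Filter.tendsto_pure.1 h1).exists_forall_of_atTop with ⟨N, hN⟩
  exact ⟨N, hN⟩

/-- Uniform version of `seq_limit` agreement over a finite window. -/
lemma agree_on_finset {f : ℕ → Config A} {y : Config A} {φ : ℕ → ℕ}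
    (h : ∀ u : ℤ × ℤ, ∃ N : ℕ, ∀ k ≥ N, f (φ k) u = y u) (D : Finset (ℤ × ℤ)) :
    ∃ N : ℕ, ∀ k ≥ N, ∀ u ∈ D, f (φ k) u = y u := by
  classical
  choose Nf hNf using h
  refine ⟨D.sup Nf, fun k hk u hu => hNf u k (le_trans (Finset.le_sup hu) hk)⟩

/-- In the countable orbit closure of `c`, the configuration `c` is isolated. -/
lemma exists_isolating_window (c : Config A) (hY : (closure (orbit c)).Countable) :
    ∃ D₀ : Finset (ℤ × ℤ), ∀ x ∈ closure (orbit c), (∀ δ ∈ D₀, x δ = c δ) → x = c := by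
  set Yc := closure (orbit c) with hYcdef
  have hcY : c ∈ Yc := subset_closure (by simpa [shift_zero] using mem_orbit 0 c)
  obtain ⟨f, hf⟩ := hY.exists_eq_range ⟨c, hcY⟩
  haveI : CompactSpace ↥Yc := isCompact_iff_compactSpace.mp isClosed_closure.isCompact
  haveI : Nonempty ↥Yc := ⟨⟨c, hcY⟩⟩
  haveI : BaireSpace ↥Yc := BaireSpace.of_t2Space_locallyCompactSpace
  have hclosed : ∀ n : ℕ, IsClosed ((Subtype.val : ↥Yc → Config A) ⁻¹' {f n}) := fun n =>
    isClosed_singleton.preimage continuous_subtype_val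
  have hcover : ⋃ n : ℕ, ((Subtype.val : ↥Yc → Config A) ⁻¹' {f n}) = Set.univ := by
    ext z
    simp only [Set.mem_iUnion, Set.mem_preimage, Set.mem_singleton_iff, Set.mem_univ, iff_true]
    have : (z : Config A) ∈ Set.range f := by rw [← hf]; exact z.2
    rcases this with ⟨n, hn⟩
    exact ⟨n, hn.symm⟩
  obtain ⟨n, hn⟩ := nonempty_interior_of_iUnion_of_closed hclosed hcover
  rcases hn with ⟨z₀, hz₀⟩
  rcases mem_interior.1 hz₀ with ⟨O, hOsub, hOopen, hzO⟩
  rcases isOpen_induced_iff.1 hOopen with ⟨V, hVopen, hVeq⟩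
  have hfn : f n ∈ Yc := by
    have : (z₀ : Config A) = f n := hOsub hzO
    rw [← this]; exact z₀.2
  have hfnV : f n ∈ V := by
    have h1 : (z₀ : Config A) = f n := hOsub hzO
    have h2 : z₀ ∈ (Subtype.val) ⁻¹' V := by rw [hVeq]; exact hzO
    rwa [← h1]
  have hpin : ∀ x ∈ Yc, x ∈ V → x = f n := by
    intro x hx hxV
    have : (⟨x, hx⟩ : ↥Yc) ∈ O := by rw [← hVeq]; exact hxV
    exact hOsub this
  have hdense : ∃ w : ℤ × ℤ, shift w c ∈ V := by
    rcases mem_closure_iff.1 hfn V hVopen hfnV with ⟨s, hsV, ⟨w, rfl⟩⟩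
    exact ⟨w, hsV⟩
  rcases hdense with ⟨w, hwV⟩
  have hwYc : shift w c ∈ Yc := subset_closure (mem_orbit w c)
  have hwn : shift w c = f n := hpin _ hwYc hwV
  rcases isOpen_pi_iff.1 hVopen (f n) hfnV with ⟨I, U, hIU, hsub⟩
  have hwin : ∀ x ∈ Yc, (∀ δ ∈ I, x δ = f n δ) → x = f n := by
    intro x hx hagree
    refine hpin x hx (hsub ?_)
    intro i hi
    rw [hagree i (by simpa using hi)]
    exact (hIU i (by simpa using hi)).2
  refine ⟨I.image (fun δ => δ + w), fun x hx hagree => ?_⟩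
  have hxw : shift w x ∈ Yc := preceq_shift_left w hx
  have h3 : shift w x = f n := by
    refine hwin _ hxw fun δ hδ => ?_
    have h1 : x (δ + w) = c (δ + w) := hagree _ (Finset.mem_image_of_mem _ hδ)
    rw [← hwn]
    exact h1
  have hx_eq : shift w x = shift w c := by rw [h3, hwn]
  have := congrArg (shift (-w)) hx_eq
  rwa [shift_shift, shift_shift, neg_add_cancel, shift_zero, shift_zero] at this

end Discrete


section Discrete2
variable [DiscreteTopology A] [Fintype A]

/-- The square window of radius `n`. -/
noncomputable def box (n : ℕ) : Finset (ℤ × ℤ) := (Finset.Icc (-(n : ℤ)) n) ×ˢ (Finset.Icc (-(n : ℤ)) n)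

lemma mem_box {n : ℕ} {u : ℤ × ℤ} : u ∈ box n ↔ |u.1| ≤ (n : ℤ) ∧ |u.2| ≤ (n : ℤ) := by
  simp [box, Finset.mem_product, abs_le]

lemma mem_box_of_le {n : ℕ} {u : ℤ × ℤ} (h1 : u.1.natAbs ≤ n) (h2 : u.2.natAbs ≤ n) :
    u ∈ box n := by
  rw [mem_box]
  constructor
  · rw [Int.abs_eq_natAbs]; exact_mod_cast h1
  · rw [Int.abs_eq_natAbs]; exact_mod_cast h2

/-- Anything `Preceq` a doubly periodic configuration is one of its shifts. -/
lemma dblper_eq_shift {x z : Config A} {a b : ℤ} (ha : 1 ≤ a) (hb : 1 ≤ b)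
    (hpa : shift (a, (0 : ℤ)) x = x) (hpb : shift ((0 : ℤ), b) x = x) (h : Preceq z x) :
    ∃ v : ℤ × ℤ, z = shift v x := by
  classical
  have hv : ∀ n : ℕ, ∃ v, ∀ u ∈ box n, x (u + v) = z u := fun n => preceq_iff.1 h (box n)
  choose v hvspec using hv
  set r : ℕ → ℤ × ℤ := fun n => ((v n).1 % a, (v n).2 % b) with hr
  have hshift_eq : ∀ n, shift (v n) x = shift (r n) x := by
    intro n
    have hper : shift (((v n).1 / a) • ((a : ℤ), (0 : ℤ)) + ((v n).2 / b) • ((0 : ℤ), b)) x = x :=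
      per_add (per_zsmul hpa _) (per_zsmul hpb _)
    have hdecomp : v n = r n + (((v n).1 / a) • ((a : ℤ), (0 : ℤ)) + ((v n).2 / b) • ((0 : ℤ), b)) := by
      have e1 := Int.emod_add_mul_ediv (v n).1 a
      have e2 := Int.emod_add_mul_ediv (v n).2 b
      ext
      · simp only [Prod.fst_add, Prod.smul_mk, smul_eq_mul, hr, mul_zero, add_zero]
        linarith [e1]
      · simp only [Prod.snd_add, Prod.smul_mk, smul_eq_mul, hr, mul_zero, zero_add]
        linarith [e2]
    rw [hdecomp, ← shift_shift, hper]
  have hrmem : ∀ n, r n ∈ (Finset.Ico (0 : ℤ) a) ×ˢ (Finset.Ico (0 : ℤ) b) := by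
    intro n
    simp only [Finset.mem_product, Finset.mem_Ico, hr]
    exact ⟨⟨Int.emod_nonneg _ (by omega), Int.emod_lt_of_pos _ (by omega)⟩,
      ⟨Int.emod_nonneg _ (by omega), Int.emod_lt_of_pos _ (by omega)⟩⟩
  have hpigeon : ∃ s, {n : ℕ | r n = s}.Infinite := by
    by_contra hfin
    push_neg at hfin
    have hsub : (Set.univ : Set ℕ) ⊆
        ⋃ s ∈ ((Finset.Ico (0 : ℤ) a) ×ˢ (Finset.Ico (0 : ℤ) b) : Finset (ℤ × ℤ)),
          {n : ℕ | r n = s} := by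
      intro n _
      exact Set.mem_biUnion (hrmem n) rfl
    exact Set.infinite_univ
      (Set.Finite.subset (Set.Finite.biUnion (Finset.finite_toSet _) (fun s _ => hfin s)) hsub)
  obtain ⟨s, hs⟩ := hpigeon
  refine ⟨s, funext fun u => ?_⟩
  obtain ⟨n, hn_mem, hn_gt⟩ := hs.exists_gt (max u.1.natAbs u.2.natAbs)
  have hu : u ∈ box n :=
    mem_box_of_le (le_of_lt (lt_of_le_of_lt (le_max_left _ _) hn_gt))
      (le_of_lt (lt_of_le_of_lt (le_max_right _ _) hn_gt))
  have h1 : x (u + v n) = z u := hvspec n u hu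
  have h2 : x (u + v n) = x (u + s) := by
    have := congrFun (hshift_eq n) u
    rw [shift_apply, shift_apply] at this
    rw [this, hn_mem]
  rw [shift_apply, ← h2, h1]

/-- A doubly periodic configuration in a subshift is at level 0. -/
lemma dblper_level0 {X : Set (Config A)} (hX : IsSubshift X) {x : Config A} (hx : x ∈ X)
    {a b : ℤ} (ha : 1 ≤ a) (hb : 1 ≤ b)
    (hpa : shift (a, (0 : ℤ)) x = x) (hpb : shift ((0 : ℤ), b) x = x) : Level0 X x := by
  refine ⟨hx, fun y _ hyx => ?_⟩
  rcases dblper_eq_shift ha hb hpa hpb hyx with ⟨v, rfl⟩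
  exact preceq_of_eq_shift (eq_shift_neg rfl)

/-- A level-1 configuration with a horizontal period has no period with nonzero
second coordinate. -/
lemma level1_no_vertical_period {X : Set (Config A)} (hX : IsSubshift X) {c : Config A}
    (hc : Level1 X c) {d : ℤ} (hd : 1 ≤ d) (hpd : shift (d, (0 : ℤ)) c = c)
    {q : ℤ × ℤ} (hq : shift q c = c) (hq2 : q.2 ≠ 0) : False := by
  have hvert : shift ((0 : ℤ), d * q.2) c = c := by
    have h1 : shift (d • q + (-q.1) • ((d : ℤ), (0 : ℤ))) c = c :=
      per_add (per_zsmul hq d) (per_zsmul hpd (-q.1))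
    have heq : ((0 : ℤ), d * q.2) = d • q + (-q.1) • ((d : ℤ), (0 : ℤ)) := by
      ext
      · simp only [Prod.fst_add, Prod.smul_fst, Prod.smul_mk, smul_eq_mul]
        ring
      · simp only [Prod.snd_add, Prod.smul_snd, Prod.smul_mk, smul_eq_mul, mul_zero, add_zero]
    rw [heq]; exact h1
  have hbpos : shift ((0 : ℤ), |d * q.2|) c = c := by
    rcases abs_cases (d * q.2) with ⟨he, _⟩ | ⟨he, _⟩
    · rw [he]; exact hvert
    · rw [he]
      have := per_neg hvert
      simpa using this
  have hb1 : 1 ≤ |d * q.2| := by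
    have h0 : d * q.2 ≠ 0 := mul_ne_zero (by omega) hq2
    have := abs_pos.mpr h0
    omega
  exact hc.2.1 (dblper_level0 hX hc.1 hd hb1 hpd hbpos)

/-- A level-0 configuration in a countable subshift has a nontrivial period in any
prescribed direction. -/
lemma level0_period_dir {X : Set (Config A)} (hX : IsSubshift X) (hcount : X.Countable)
    {x : Config A} (hx : Level0 X x) (e : ℤ × ℤ) :
    ∃ a : ℤ, 1 ≤ a ∧ shift (a • e) x = x := by
  classical
  set M := closure (orbit x) with hM
  have hMX : M ⊆ X := fun z hz => mem_of_preceq hX hx.1 hz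
  obtain ⟨D₀, hD₀⟩ := exists_isolating_window x (hcount.mono hMX)
  obtain ⟨y, φ, hφ, hconv⟩ := seq_limit (fun k => shift ((k : ℤ) • e) x)
  have hyM : y ∈ M := by
    rw [hM, mem_closure_iff_finset]
    intro D
    obtain ⟨N, hN⟩ :=
      agree_on_finset (f := fun k => shift ((k : ℤ) • e) x) (φ := φ) (y := y) hconv D
    exact ⟨shift ((φ N : ℤ) • e) x, mem_orbit ((φ N : ℤ) • e) x, fun u hu => hN N le_rfl u hu⟩
  have horb : ∃ w, y = shift w x := by
    have hyX : y ∈ X := hMX hyM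
    have hxy : Preceq x y := hx.2 y hyX hyM
    rcases preceq_iff.1 hxy D₀ with ⟨v, hv⟩
    have hsv : shift v y ∈ M := preceq_shift_left v hyM
    have h1 : shift v y = x := hD₀ _ hsv (fun δ hδ => hv δ hδ)
    exact ⟨-v, eq_shift_neg h1⟩
  obtain ⟨w, hw⟩ := horb
  have hagree : ∃ K, ∀ k ≥ K, shift ((φ k : ℤ) • e - w) x = x := by
    obtain ⟨N, hN⟩ := agree_on_finset (f := fun k => shift ((k : ℤ) • e) x) (φ := φ) (y := y)
      hconv (D₀.image (fun δ => δ - w))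
    refine ⟨N, fun k hk => ?_⟩
    apply hD₀ _ (subset_closure (mem_orbit _ _))
    intro δ hδ
    have h1 : shift ((φ k : ℤ) • e) x (δ - w) = y (δ - w) :=
      hN k hk _ (Finset.mem_image_of_mem _ hδ)
    rw [shift_apply] at h1
    have h2 : y (δ - w) = x δ := by
      rw [hw, shift_apply]
      congr 1
      abel
    rw [shift_apply]
    rw [← h2, ← h1]
    congr 1
    abel
  obtain ⟨K, hK⟩ := hagree
  have h1 := hK K le_rfl
  have h2 := hK (K + 1) (Nat.le_succ K)
  refine ⟨(φ (K + 1) : ℤ) - (φ K : ℤ), ?_, ?_⟩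
  · have : φ K < φ (K + 1) := hφ (Nat.lt_succ_self K)
    omega
  · have hveq : ((φ (K + 1) : ℤ) - (φ K : ℤ)) • e
        = ((φ (K + 1) : ℤ) • e - w) + -((φ K : ℤ) • e - w) := by
      rw [sub_smul]; abel
    rw [hveq, ← shift_shift, per_neg h1, h2]

/-- A level-0 configuration in a countable subshift is doubly periodic along the axes. -/
lemma level0_axis_periods {X : Set (Config A)} (hX : IsSubshift X) (hcount : X.Countable)
    {x : Config A} (hx : Level0 X x) :
    ∃ a b : ℤ, 1 ≤ a ∧ 1 ≤ b ∧ shift (a, (0 : ℤ)) x = x ∧ shift ((0 : ℤ), b) x = x := by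
  obtain ⟨a, ha1, ha2⟩ := level0_period_dir hX hcount hx ((1 : ℤ), (0 : ℤ))
  obtain ⟨b, hb1, hb2⟩ := level0_period_dir hX hcount hx ((0 : ℤ), (1 : ℤ))
  refine ⟨a, b, ha1, hb1, ?_, ?_⟩
  · have : a • ((1 : ℤ), (0 : ℤ)) = (a, (0 : ℤ)) := by
      simp [Prod.smul_mk]
    rwa [this] at ha2
  · have : b • ((0 : ℤ), (1 : ℤ)) = ((0 : ℤ), b) := by
      simp [Prod.smul_mk]
    rwa [this] at hb2

end Discrete2


section Side
variable [DiscreteTopology A] [Fintype A]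

/-- Main one-sided lemma: a level-1 configuration with horizontal period `(d,0)`,
isolated in its orbit closure, is eventually vertically periodic in the direction `ε`. -/
lemma side_periodicity {X : Set (Config A)} (hX : IsSubshift X) (hcount : X.Countable)
    {c : Config A} (hc : Level1 X c) {d : ℤ} (hd : 1 ≤ d)
    (hpd : shift (d, (0 : ℤ)) c = c)
    {D₀ : Finset (ℤ × ℤ)} (hiso : ∀ x ∈ closure (orbit c), (∀ δ ∈ D₀, x δ = c δ) → x = c)
    {ε : ℤ} (hε : ε = 1 ∨ ε = -1) :
    ∃ m : ℤ, 1 ≤ m ∧ ∃ t : ℤ, ∀ u : ℤ × ℤ, t ≤ ε * u.2 → c (u + ((0 : ℤ), m)) = c u := by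
  classical
  have hε2 : ε * ε = 1 := by rcases hε with h | h <;> simp [h]
  -- the limit set in direction ε
  set Ω : Set (Config A) :=
    {x | ∀ (D : Finset (ℤ × ℤ)) (n : ℤ), ∃ v : ℤ × ℤ, n ≤ ε * v.2 ∧ ∀ δ ∈ D, c (δ + v) = x δ}
    with hΩdef
  -- Ω is nonempty
  obtain ⟨x₀, φ, hφ, hconv⟩ := seq_limit (fun k : ℕ => shift ((0 : ℤ), ε * k) c)
  have hx₀ : x₀ ∈ Ω := by
    intro D n
    obtain ⟨N, hN⟩ := agree_on_finset (f := fun k : ℕ => shift ((0 : ℤ), ε * k) c)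
      (φ := φ) (y := x₀) hconv D
    set k := max N n.toNat with hk
    refine ⟨((0 : ℤ), ε * (φ k : ℤ)), ?_, fun δ hδ => ?_⟩
    · have h1 : (k : ℤ) ≤ (φ k : ℤ) := by exact_mod_cast hφ.le_apply
      have h2 : n ≤ (k : ℤ) := by
        have := le_max_right N n.toNat
        omega
      calc n ≤ (φ k : ℤ) := le_trans h2 h1
        _ = ε * (ε * (φ k : ℤ)) := by rw [← mul_assoc, hε2, one_mul]
        _ = ε * ((0 : ℤ), ε * (φ k : ℤ)).2 := rfl
    · have := hN k (le_max_left _ _) δ hδ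
      rw [shift_apply] at this
      exact this
  -- basic facts about elements of Ω
  have hΩpre : ∀ x ∈ Ω, Preceq x c := by
    intro x hx
    refine preceq_iff.2 fun D => ?_
    rcases hx D 0 with ⟨v, -, hv⟩
    exact ⟨v, hv⟩
  have hΩX : ∀ x ∈ Ω, x ∈ X := fun x hx => mem_of_preceq hX hc.1 (hΩpre x hx)
  have hΩnotc : ∀ x ∈ Ω, ¬ Preceq c x := by
    intro x hx hcx
    rcases preceq_iff.1 hcx D₀ with ⟨w, hw⟩
    rcases hx (D₀.image (· + w)) (|w.2| + 1) with ⟨v, hv2, hv⟩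
    have hper : shift (w + v) c = c := by
      apply hiso _ (subset_closure (mem_orbit _ _))
      intro δ hδ
      have h1 : c (δ + w + v) = x (δ + w) := hv _ (Finset.mem_image_of_mem _ hδ)
      rw [shift_apply]
      calc c (δ + (w + v)) = c (δ + w + v) := by rw [add_assoc]
        _ = x (δ + w) := h1
        _ = c δ := hw δ hδ
    have h2 : (w + v).2 ≠ 0 := by
      rw [Prod.snd_add]
      have h3 := neg_abs_le w.2
      have h4 := le_abs_self w.2
      rcases hε with h | h <;> rw [h] at hv2 <;> omega
    exact level1_no_vertical_period hX hc hd hpd hper h2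
  have hΩper : ∀ x ∈ Ω, ∃ a b : ℤ, 1 ≤ a ∧ 1 ≤ b ∧
      shift (a, (0 : ℤ)) x = x ∧ shift ((0 : ℤ), b) x = x := by
    intro x hx
    exact level0_axis_periods hX hcount (hc.2.2 x (hΩX x hx) ⟨hΩpre x hx, hΩnotc x hx⟩)
  -- elements of Ω inherit the horizontal period
  have hΩhper : ∀ x ∈ Ω, shift (d, (0 : ℤ)) x = x := by
    intro x hx
    funext u
    rcases hx ({u, u + (d, (0 : ℤ))} : Finset (ℤ × ℤ)) 0 with ⟨v, -, hv⟩
    have h1 : c (u + v) = x u := hv u (by simp)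
    have h2 : c (u + (d, (0 : ℤ)) + v) = x (u + (d, (0 : ℤ))) := hv _ (by simp)
    rw [shift_apply, ← h1, ← h2]
    have heq : u + (d, (0 : ℤ)) + v = (u + v) + (d, (0 : ℤ)) := by abel
    rw [heq, per_apply hpd]
  -- fix the vertical period of one element of Ω
  obtain ⟨a₀, m, ha₀, hm1, hpa₀, hpm⟩ := hΩper x₀ hx₀
  refine ⟨m, hm1, ?_⟩
  by_contra hbad
  push_neg at hbad
  -- the set of bad rows
  set B : Set ℤ := {j | ∃ i : ℤ, c ((i, j) + ((0 : ℤ), m)) ≠ c (i, j)} with hBdef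
  have hBunb : ∀ t : ℤ, ∃ j ∈ B, t ≤ ε * j := by
    intro t
    rcases hbad t with ⟨u, h1, h2⟩
    refine ⟨u.2, ⟨u.1, ?_⟩, h1⟩
    rw [Prod.mk.eta]
    exact h2
  -- key construction: for each k, a recentering point with controlled behaviour
  have hkey : ∀ k : ℕ, ∃ u : ℤ × ℤ,
      ((k : ℤ) ≤ ε * u.2) ∧ (c (u + ((0 : ℤ), m)) ≠ c u) ∧
      (∀ z : ℤ × ℤ, ε * z.2 ≤ -1 → -(k : ℤ) ≤ ε * z.2 →
        c (z + u + ((0 : ℤ), m)) = c (z + u)) := by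
    intro k
    set n : ℕ := k + d.toNat + m.toNat with hn
    have hdn : d ≤ (n : ℤ) := by
      have : ((d.toNat : ℤ)) = d := Int.toNat_of_nonneg (by omega)
      push_cast [hn]
      omega
    have hmn : m ≤ (n : ℤ) := by
      have : ((m.toNat : ℤ)) = m := Int.toNat_of_nonneg (by omega)
      push_cast [hn]
      omega
    have hkn : (k : ℤ) + m ≤ (n : ℤ) := by
      have h1 : ((d.toNat : ℤ)) = d := Int.toNat_of_nonneg (by omega)
      have h2 : ((m.toNat : ℤ)) = m := Int.toNat_of_nonneg (by omega)
      push_cast [hn]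
      omega
    -- a chunk of x₀ appears at height ≥ n
    rcases hx₀ (box n) (n : ℤ) with ⟨v, hvht, hv⟩
    -- full-row agreement with x₀ around the chunk
    have hrow : ∀ i j : ℤ, |j| ≤ (n : ℤ) → c ((i, j) + v) = x₀ (i, j) := by
      intro i j hj
      set k₁ : ℤ := (i + n) / d with hk₁
      set i' : ℤ := i - d * k₁ with hi'
      have hr : i - d * k₁ = (i + n) % d - n := by
        have := Int.emod_add_mul_ediv (i + (n : ℤ)) d
        rw [hk₁]
        omega
      have hi'range : -(n : ℤ) ≤ i' ∧ i' ≤ (n : ℤ) := by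
        have h1 := Int.emod_nonneg (i + (n : ℤ)) (by omega : d ≠ 0)
        have h2 := Int.emod_lt_of_pos (i + (n : ℤ)) (by omega : (0 : ℤ) < d)
        rw [hi', hr]
        omega
      have hbox : ((i', j) : ℤ × ℤ) ∈ box n := by
        rw [mem_box]
        exact ⟨abs_le.mpr ⟨hi'range.1, hi'range.2⟩, hj⟩
      have e1 : ((i, j) : ℤ × ℤ) + v = ((i', j) + v) + k₁ • ((d : ℤ), (0 : ℤ)) := by
        ext
        · simp only [Prod.fst_add, Prod.smul_mk, smul_eq_mul, mul_comm]
          rw [hi']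
          ring
        · simp only [Prod.snd_add, Prod.smul_mk, smul_eq_mul, mul_zero, add_zero]
      have e2 : ((i, j) : ℤ × ℤ) = ((i', j)) + k₁ • ((d : ℤ), (0 : ℤ)) := by
        ext
        · simp only [Prod.fst_add, Prod.smul_mk, smul_eq_mul, mul_comm]
          rw [hi']
          ring
        · simp only [Prod.snd_add, Prod.smul_mk, smul_eq_mul, mul_zero, add_zero]
      rw [e1, per_apply (per_zsmul hpd k₁), hv _ hbox, e2,
        per_apply (per_zsmul (hΩhper x₀ hx₀) k₁)]
    -- no bad rows in the band of the chunk
    have hband : ∀ j : ℤ, -(n : ℤ) ≤ j - v.2 → j - v.2 ≤ (n : ℤ) - m → j ∉ B := by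
      intro j h1 h2 hjB
      rcases hjB with ⟨i, hi⟩
      apply hi
      have e0 : ((i, j) : ℤ × ℤ) = ((i - v.1, j - v.2)) + v := by
        ext <;> simp
      have e1 : ((i, j) : ℤ × ℤ) + ((0 : ℤ), m) = ((i - v.1, j - v.2 + m)) + v := by
        ext <;> simp <;> ring
      have e2 : ((i - v.1, j - v.2 + m) : ℤ × ℤ) = (i - v.1, j - v.2) + ((0 : ℤ), m) := by
        ext <;> simp
      rw [e1, e0, hrow _ _ (by rw [abs_le]; omega), hrow _ _ (by rw [abs_le]; omega), e2]
      exact per_apply hpm _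
    -- least bad row above the chunk (in direction ε)
    have hex : ∃ k' : ℕ, ∃ j ∈ B, ε * j = (ε * v.2 - n + m) + k' := by
      rcases hBunb (ε * v.2 - n + m) with ⟨j, hj, hjge⟩
      exact ⟨(ε * j - (ε * v.2 - n + m)).toNat, j, hj, by omega⟩
    obtain ⟨β, hβB, hβeq⟩ := Nat.find_spec hex
    have hmin : ∀ j ∈ B, (ε * v.2 - n + m) ≤ ε * j → ε * β ≤ ε * j := by
      intro j hj hjT
      have h1 : (ε * j - (ε * v.2 - n + m)).toNat ∈
          {k' : ℕ | ∃ j' ∈ B, ε * j' = (ε * v.2 - n + m) + k'} := ⟨j, hj, by omega⟩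
      have h2 := Nat.find_min' hex h1
      omega
    -- the first bad row is far above the chunk
    have hβfar : ε * v.2 + ((n : ℤ) - m + 1) ≤ ε * β := by
      have hnotband : β - v.2 < -(n : ℤ) ∨ (n : ℤ) - m < β - v.2 := by
        by_contra hcon
        push_neg at hcon
        exact hband β (by omega) hcon.2 hβB
      rcases hε with h | h <;> subst h <;> omega
    -- the recentering point
    have hβB' := hβB
    rw [hBdef] at hβB'
    obtain ⟨i₀, hfail⟩ := hβB'
    refine ⟨(i₀, β), ?_, hfail, ?_⟩
    · show (k : ℤ) ≤ ε * β
      omega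
    · intro z hz1 hz2
      have hsum : ε * (z.2 + β) = ε * z.2 + ε * β := by ring
      have hjrange1 : (ε * v.2 - n + m) ≤ ε * (z.2 + β) := by omega
      have hjrange2 : ε * (z.2 + β) < ε * β := by omega
      have hjnotB : (z.2 + β) ∉ B := by
        intro hjB
        have := hmin (z.2 + β) hjB hjrange1
        omega
      have hgood : ∀ i : ℤ, c ((i, z.2 + β) + ((0 : ℤ), m)) = c (i, z.2 + β) := by
        intro i
        by_contra hne
        exact hjnotB ⟨i, hne⟩
      have e0 : z + (i₀, β) = ((z.1 + i₀, z.2 + β) : ℤ × ℤ) := by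
        ext <;> simp
      rw [e0]
      exact hgood (z.1 + i₀)
  choose useq hu1 hu2 hu3 using hkey
  -- pass to the limit
  obtain ⟨ζ, ψ, hψ, hζconv⟩ := seq_limit (fun k : ℕ => shift (useq k) c)
  -- ζ belongs to Ω
  have hζΩ : ζ ∈ Ω := by
    intro D t
    obtain ⟨N, hN⟩ := agree_on_finset (f := fun k : ℕ => shift (useq k) c)
      (φ := ψ) (y := ζ) hζconv D
    set k := max N t.toNat with hk
    refine ⟨useq (ψ k), ?_, fun δ hδ => ?_⟩
    · have h1 : (ψ k : ℤ) ≤ ε * (useq (ψ k)).2 := hu1 (ψ k)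
      have h2 : (k : ℤ) ≤ (ψ k : ℤ) := by exact_mod_cast hψ.le_apply
      have h3 : t ≤ (k : ℤ) := by
        have := le_max_right N t.toNat
        omega
      omega
    · have := hN k (le_max_left _ _) δ hδ
      rw [shift_apply] at this
      exact this
  -- ζ has a failure of (0,m)-periodicity at the origin
  have hζfail : ζ (((0 : ℤ), m) : ℤ × ℤ) ≠ ζ ((0 : ℤ), (0 : ℤ)) := by
    obtain ⟨N1, hN1⟩ := hζconv (((0 : ℤ), m) : ℤ × ℤ)
    obtain ⟨N0, hN0⟩ := hζconv (((0 : ℤ), (0 : ℤ)) : ℤ × ℤ)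
    set k := max N1 N0 with hk
    have h1 := hN1 k (le_max_left _ _)
    have h0 := hN0 k (le_max_right _ _)
    rw [shift_apply] at h1 h0
    rw [← h1, ← h0]
    have e1 : ((0 : ℤ), m) + useq (ψ k) = useq (ψ k) + ((0 : ℤ), m) := by abel
    have e0 : ((0 : ℤ), (0 : ℤ)) + useq (ψ k) = useq (ψ k) := by simp
    rw [e1, e0]
    exact hu2 (ψ k)
  -- ζ is (0,m)-periodic strictly below the origin
  have hζgood : ∀ z : ℤ × ℤ, ε * z.2 ≤ -1 → ζ (z + ((0 : ℤ), m)) = ζ z := by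
    intro z hz
    obtain ⟨N1, hN1⟩ := hζconv (z + ((0 : ℤ), m))
    obtain ⟨N0, hN0⟩ := hζconv z
    set k := max (max N1 N0) (-(ε * z.2)).toNat with hk
    have h1 := hN1 k (le_trans (le_max_left _ _) (le_max_left _ _))
    have h0 := hN0 k (le_trans (le_max_right _ _) (le_max_left _ _))
    rw [shift_apply] at h1 h0
    rw [← h1, ← h0]
    have hkz : -(ψ k : ℤ) ≤ ε * z.2 := by
      have h2 : (k : ℤ) ≤ (ψ k : ℤ) := by exact_mod_cast hψ.le_apply
      have h3 := le_max_right (max N1 N0) (-(ε * z.2)).toNat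
      have h4 : ((-(ε * z.2)).toNat : ℤ) ≤ (k : ℤ) := by exact_mod_cast h3
      omega
    have := hu3 (ψ k) z hz hkz
    have e1 : z + ((0 : ℤ), m) + useq (ψ k) = z + useq (ψ k) + ((0 : ℤ), m) := by abel
    rw [e1, this]
  -- ζ has a vertical period, contradiction
  obtain ⟨a₁, b₁, ha₁, hb₁, hpa₁, hpb₁⟩ := hΩper ζ hζΩ
  apply hζfail
  have hzper : shift ((0 : ℤ), -ε * b₁) ζ = ζ := by
    have := per_zsmul hpb₁ (-ε)
    have e : (-ε) • (((0 : ℤ), b₁) : ℤ × ℤ) = ((0 : ℤ), -ε * b₁) := by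
      ext <;> simp [Prod.smul_mk]
    rwa [e] at this
  have hgoodpt : ε * (((0 : ℤ), -ε * b₁) : ℤ × ℤ).2 ≤ -1 := by
    show ε * (-ε * b₁) ≤ -1
    have h5 : ε * (-ε * b₁) = -(ε * ε) * b₁ := by ring
    rw [h5, hε2]
    omega
  calc ζ (((0 : ℤ), m) : ℤ × ℤ)
      = ζ (((0 : ℤ), m) + ((0 : ℤ), -ε * b₁)) := (per_apply hzper _).symm
    _ = ζ (((0 : ℤ), -ε * b₁) + ((0 : ℤ), m)) := by rw [add_comm]
    _ = ζ (((0 : ℤ), -ε * b₁)) := hζgood _ hgoodpt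
    _ = ζ (((0 : ℤ), (0 : ℤ)) + ((0 : ℤ), -ε * b₁)) := by
        congr 1
        ext <;> simp
    _ = ζ (((0 : ℤ), (0 : ℤ))) := per_apply hzper _

end Side


section Extension
variable [DiscreteTopology A] [Fintype A]

/-- From one-sided eventual vertical periodicity, build a doubly periodic configuration
strictly below `c` agreeing with `c` on the corresponding half-plane. -/
lemma build_extension {X : Set (Config A)} (hX : IsSubshift X) {c : Config A}
    (hc : Level1 X c) {d : ℤ} (hd : 1 ≤ d) (hpd : shift (d, (0 : ℤ)) c = c)
    {ε : ℤ} (hε : ε = 1 ∨ ε = -1) {m t : ℤ} (hm : 1 ≤ m)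
    (hper : ∀ u : ℤ × ℤ, t ≤ ε * u.2 → c (u + ((0 : ℤ), m)) = c u) :
    ∃ y : Config A, y ∈ X ∧ Prec y c ∧ ∀ u : ℤ × ℤ, t ≤ ε * u.2 → c u = y u := by
  classical
  have hε2 : ε * ε = 1 := by rcases hε with h | h <;> simp [h]
  -- single step in the direction ε
  have hstep : ∀ z : ℤ × ℤ, t ≤ ε * z.2 → c (z + ((0 : ℤ), ε * m)) = c z := by
    intro z hz
    rcases hε with h | h
    · subst h
      rw [one_mul]
      exact hper z hz
    · subst h
      have e1 : z + ((0 : ℤ), -1 * m) + ((0 : ℤ), m) = z := by ext <;> simp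
      have h2 : t ≤ -1 * (z + ((0 : ℤ), -1 * m)).2 := by
        rw [Prod.snd_add]
        dsimp
        omega
      have := hper (z + ((0 : ℤ), -1 * m)) h2
      rw [e1] at this
      exact this.symm
  -- iterated steps
  have hstepN : ∀ z : ℤ × ℤ, t ≤ ε * z.2 → ∀ k : ℕ, c (z + ((0 : ℤ), ε * m * k)) = c z := by
    intro z hz k
    induction k with
    | zero => simp; congr 1; ext <;> simp
    | succ k ih =>
      have hz' : t ≤ ε * (z + ((0 : ℤ), ε * m * k)).2 := by
        rw [Prod.snd_add]
        dsimp
        have : ε * (z.2 + ε * m * k) = ε * z.2 + (ε * ε) * (m * k) := by ring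
        rw [this, hε2, one_mul]
        have hk : (0 : ℤ) ≤ m * k := by positivity
        omega
      have := hstep _ hz'
      have e1 : z + ((0 : ℤ), ε * m * k) + ((0 : ℤ), ε * m) = z + ((0 : ℤ), ε * m * (k + 1 : ℕ)) := by
        ext
        · simp
        · simp only [Prod.snd_add]
          push_cast
          ring
      rw [e1] at this
      rw [this, ih]
  -- the jump count
  set N : ℤ × ℤ → ℕ := fun u => (t - ε * u.2).toNat with hNdef
  have hNspec : ∀ u : ℤ × ℤ, t ≤ ε * (u + ((0 : ℤ), ε * m * N u)).2 := by
    intro u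
    rw [Prod.snd_add]
    dsimp
    have e1 : ε * (u.2 + ε * m * N u) = ε * u.2 + (ε * ε) * (m * N u) := by ring
    rw [e1, hε2, one_mul]
    have h1 : ((N u : ℤ)) ≤ m * N u := le_mul_of_one_le_left (by positivity) hm
    have h2 : t - ε * u.2 ≤ (N u : ℤ) := by
      rw [hNdef]
      dsimp
      omega
    omega
  set y : Config A := fun u => c (u + ((0 : ℤ), ε * m * N u)) with hydef
  -- coherence
  have hcoh : ∀ (u : ℤ × ℤ) (k : ℕ), N u ≤ k → y u = c (u + ((0 : ℤ), ε * m * k)) := by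
    intro u k hk
    have e1 : u + ((0 : ℤ), ε * m * k)
        = (u + ((0 : ℤ), ε * m * N u)) + ((0 : ℤ), ε * m * ((k - N u : ℕ) : ℤ)) := by
      ext
      · simp
      · simp only [Prod.snd_add]
        have : (((k - N u : ℕ)) : ℤ) = (k : ℤ) - (N u : ℤ) := by
          push_cast [Nat.cast_sub hk]
          ring
        rw [this]
        ring
    rw [hydef]
    dsimp
    rw [e1]
    exact (hstepN _ (hNspec u) _).symm
  -- agreement on the half-plane
  have hagree : ∀ u : ℤ × ℤ, t ≤ ε * u.2 → c u = y u := by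
    intro u hu
    rw [hydef]
    dsimp
    exact (hstepN u hu (N u)).symm
  -- y is below c
  have hypre : Preceq y c := by
    refine preceq_iff.2 fun D => ?_
    refine ⟨((0 : ℤ), ε * m * (D.sup N : ℕ)), fun u hu => ?_⟩
    exact (hcoh u (D.sup N) (Finset.le_sup hu)).symm
  -- periods of y
  have hyvertε : shift ((0 : ℤ), ε * m) y = y := by
    funext u
    rw [shift_apply]
    set K := max (N (u + ((0 : ℤ), ε * m))) (N u) with hK
    have h1 : y (u + ((0 : ℤ), ε * m)) = c (u + ((0 : ℤ), ε * m) + ((0 : ℤ), ε * m * K)) :=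
      hcoh _ K (le_max_left _ _)
    have h2 : y u = c (u + ((0 : ℤ), ε * m * (K + 1 : ℕ))) := hcoh _ (K + 1) (by omega)
    have e1 : u + ((0 : ℤ), ε * m) + ((0 : ℤ), ε * m * K) = u + ((0 : ℤ), ε * m * (K + 1 : ℕ)) := by
      ext
      · simp
      · simp only [Prod.snd_add]
        push_cast
        ring
    rw [h1, h2, e1]
  have hyvert : shift ((0 : ℤ), m) y = y := by
    rcases hε with h | h
    · rw [h, one_mul] at hyvertε
      exact hyvertε
    · rw [h] at hyvertε
      have := per_neg hyvertε
      have e1 : -(((0 : ℤ), -1 * m) : ℤ × ℤ) = ((0 : ℤ), m) := by ext <;> simp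
      rwa [e1] at this
  have hyhoriz : shift (d, (0 : ℤ)) y = y := by
    funext u
    rw [shift_apply, hydef]
    dsimp
    have hNeq : N (u + (d, (0 : ℤ))) = N u := by
      rw [hNdef]
      dsimp
      norm_num
    rw [hNeq]
    have e1 : u + (d, (0 : ℤ)) + ((0 : ℤ), ε * m * N u)
        = (u + ((0 : ℤ), ε * m * N u)) + (d, (0 : ℤ)) := by abel
    rw [e1, per_apply hpd]
  -- c is not below y
  have hnot : ¬ Preceq c y := by
    intro hcy
    rcases dblper_eq_shift hd hm hyhoriz hyvert hcy with ⟨v, hv⟩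
    have hcper : shift ((0 : ℤ), m) c = c := by
      rw [hv, shift_shift, add_comm, ← shift_shift, hyvert]
    exact level1_no_vertical_period hX hc hd hpd hcper (by simp; omega)
  exact ⟨y, mem_of_preceq hX hc.1 hypre, ⟨hypre, hnot⟩, hagree⟩

end Extension


section Transport
variable [DiscreteTopology A] [Fintype A]

/-- Precomposition with a coordinate change. -/
def conj (ι : ℤ × ℤ → ℤ × ℤ) (x : Config A) : Config A := fun u => x (ι u)

lemma conj_conj {ι ι' : ℤ × ℤ → ℤ × ℤ} (hinv : ∀ u, ι (ι' u) = u) (x : Config A) :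
    conj ι' (conj ι x) = x := by
  funext u
  simp [conj, hinv]

lemma invariant_of_mem {S : Set (Config A)} (h : ∀ v : ℤ × ℤ, ∀ x ∈ S, shift v x ∈ S) :
    ∀ v : ℤ × ℤ, shift v '' S = S := by
  intro v
  apply Set.Subset.antisymm
  · rintro - ⟨x, hx, rfl⟩
    exact h v x hx
  · intro z hz
    refine ⟨shift (-v) z, h (-v) z hz, ?_⟩
    rw [shift_shift, add_neg_cancel, shift_zero]

lemma conj_shift {ι ι' : ℤ × ℤ → ℤ × ℤ} (hadd : ∀ u v, ι (u + v) = ι u + ι v)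
    (hinv : ∀ u, ι (ι' u) = u) (v : ℤ × ℤ) (x : Config A) :
    conj ι (shift v x) = shift (ι' v) (conj ι x) := by
  funext u
  simp only [conj, shift]
  rw [hadd, hinv]

lemma conj_preceq {ι ι' : ℤ × ℤ → ℤ × ℤ} (hadd : ∀ u v, ι (u + v) = ι u + ι v)
    (hinv : ∀ u, ι (ι' u) = u) {x y : Config A} (h : Preceq x y) :
    Preceq (conj ι x) (conj ι y) := by
  refine preceq_iff.2 fun D => ?_
  rcases preceq_iff.1 h (D.image ι) with ⟨v, hv⟩
  refine ⟨ι' v, fun u hu => ?_⟩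
  simp only [conj]
  rw [hadd, hinv]
  exact hv (ι u) (Finset.mem_image_of_mem _ hu)

lemma conj_mem_iff {ι ι' : ℤ × ℤ → ℤ × ℤ} (hinv : ∀ u, ι (ι' u) = u)
    {X : Set (Config A)} {x : Config A} :
    conj ι x ∈ conj ι '' X ↔ x ∈ X := by
  constructor
  · rintro ⟨x', hx', heq⟩
    have := congrArg (conj ι') heq
    rw [conj_conj hinv, conj_conj hinv] at this
    rwa [← this]
  · exact fun hx => Set.mem_image_of_mem _ hx

lemma conj_subshift {ι ι' : ℤ × ℤ → ℤ × ℤ} (hadd : ∀ u v, ι (u + v) = ι u + ι v)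
    (hinv : ∀ u, ι (ι' u) = u) (hinv' : ∀ u, ι' (ι u) = u)
    {X : Set (Config A)} (hX : IsSubshift X) : IsSubshift (conj ι '' X) := by
  refine ⟨hX.1.image _, ?_, ?_⟩
  · have heq : conj ι '' X = conj ι' ⁻¹' X := by
      ext z
      constructor
      · rintro ⟨x, hx, rfl⟩
        rw [Set.mem_preimage, conj_conj hinv]
        exact hx
      · intro hz
        exact ⟨conj ι' z, hz, by
          funext u
          simp [conj, hinv']⟩
    rw [heq]
    exact hX.2.1.preimage (continuous_pi fun u => continuous_apply (ι' u))
  · apply invariant_of_mem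
    rintro v - ⟨x, hx, rfl⟩
    have h1 : shift (ι v) x ∈ X := by
      rw [← hX.2.2 (ι v)]
      exact Set.mem_image_of_mem _ hx
    refine ⟨shift (ι v) x, h1, ?_⟩
    rw [conj_shift hadd hinv, hinv']

lemma conj_level0 {ι ι' : ℤ × ℤ → ℤ × ℤ} (hadd : ∀ u v, ι (u + v) = ι u + ι v)
    (hadd' : ∀ u v, ι' (u + v) = ι' u + ι' v)
    (hinv : ∀ u, ι (ι' u) = u) (hinv' : ∀ u, ι' (ι u) = u)
    {X : Set (Config A)} {x : Config A} (h : Level0 X x) :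
    Level0 (conj ι '' X) (conj ι x) := by
  refine ⟨Set.mem_image_of_mem _ h.1, ?_⟩
  rintro - ⟨z, hz, rfl⟩ hzx
  have h1 : Preceq z x := by
    have := conj_preceq hadd' hinv' hzx
    rwa [conj_conj hinv, conj_conj hinv] at this
  exact conj_preceq hadd hinv (h.2 z hz h1)

lemma conj_level1 {ι ι' : ℤ × ℤ → ℤ × ℤ} (hadd : ∀ u v, ι (u + v) = ι u + ι v)
    (hadd' : ∀ u v, ι' (u + v) = ι' u + ι' v)
    (hinv : ∀ u, ι (ι' u) = u) (hinv' : ∀ u, ι' (ι u) = u)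
    {X : Set (Config A)} {x : Config A} (h : Level1 X x) :
    Level1 (conj ι '' X) (conj ι x) := by
  refine ⟨Set.mem_image_of_mem _ h.1, ?_, ?_⟩
  · intro hl0
    apply h.2.1
    have := conj_level0 hadd' hadd hinv' hinv hl0
    rw [conj_conj hinv] at this
    have heq : conj ι' '' (conj ι '' X) = X := by
      ext z
      constructor
      · rintro ⟨-, ⟨x', hx', rfl⟩, rfl⟩
        rwa [conj_conj hinv]
      · intro hz
        exact ⟨conj ι z, Set.mem_image_of_mem _ hz, conj_conj hinv z⟩
    rwa [heq] at this
  · rintro - ⟨z, hz, rfl⟩ ⟨hz1, hz2⟩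
    have h1 : Preceq z x := by
      have := conj_preceq hadd' hinv' hz1
      rwa [conj_conj hinv, conj_conj hinv] at this
    have h2 : ¬ Preceq x z := fun hxz => hz2 (conj_preceq hadd hinv hxz)
    exact conj_level0 hadd hadd' hinv hinv' (h.2.2 z hz ⟨h1, h2⟩)

end Transport


theorem stmt5 {A : Type*} [Fintype A] [Nonempty A] [TopologicalSpace A] [DiscreteTopology A]
    (X : Set (Config A)) (hX : IsSubshift X) (hcount : X.Countable)
    (c : Config A) (hc : Level1 X c) (hpat : AllPatternsInfinite c) :
    ∃ y ∈ X, ∃ y' ∈ X, Prec y c ∧ Prec y' c ∧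
      ∃ w : ℤ × ℤ, w ≠ 0 ∧ ∃ t₀ t₁ : ℤ, t₀ ≤ t₁ ∧
        (∀ u : ℤ × ℤ, t₁ ≤ dot u w → c u = y u) ∧
        (∀ u : ℤ × ℤ, dot u w ≤ t₀ → c u = y' u) := by
  classical
  -- Step 1: c is isolated in its orbit closure
  obtain ⟨D₀, hiso⟩ := exists_isolating_window c
    (hcount.mono (fun z hz => mem_of_preceq hX hc.1 hz))
  -- Step 2: a nonzero period of c
  have hinf := hpat D₀ 0
  obtain ⟨p, hp⟩ := (hinf.diff (Set.finite_singleton 0)).nonempty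
  have hp0 : p ≠ 0 := fun h => hp.2 (by simp [h])
  have hpper : shift p c = c := by
    apply hiso _ (subset_closure (mem_orbit p c))
    intro δ hδ
    have h1 := hp.1 δ hδ
    rw [zero_add] at h1
    show c (δ + p) = c δ
    rw [add_comm]
    exact h1
  -- Step 3: arithmetic setup
  set d : ℤ := (Int.gcd p.1 p.2 : ℤ) with hddef
  have hd : 1 ≤ d := by
    have h1 : Int.gcd p.1 p.2 ≠ 0 := by
      intro h
      apply hp0
      have := Int.gcd_eq_zero_iff.1 h
      ext <;> simp [this.1, this.2]
    have h2 : 0 < Int.gcd p.1 p.2 := Nat.pos_of_ne_zero h1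
    rw [hddef]
    exact_mod_cast h2
  set p1' : ℤ := p.1 / d with hp1'def
  set p2' : ℤ := p.2 / d with hp2'def
  have hp1 : d * p1' = p.1 := Int.mul_ediv_cancel' (Int.gcd_dvd_left _ _)
  have hp2 : d * p2' = p.2 := Int.mul_ediv_cancel' (Int.gcd_dvd_right _ _)
  set α : ℤ := Int.gcdA p.1 p.2 with hαdef
  set β : ℤ := Int.gcdB p.1 p.2 with hβdef
  have hbez0 : d = p.1 * α + p.2 * β := Int.gcd_eq_gcd_ab p.1 p.2
  have hbez : p1' * α + p2' * β = 1 := by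
    have h1 : d * (p1' * α + p2' * β) = d * 1 := by
      rw [mul_one]
      calc d * (p1' * α + p2' * β) = (d * p1') * α + (d * p2') * β := by ring
        _ = p.1 * α + p.2 * β := by rw [hp1, hp2]
        _ = d := hbez0.symm
    exact mul_left_cancel₀ (by omega) h1
  -- Step 4: the coordinate change
  set ι : ℤ × ℤ → ℤ × ℤ := fun z => (z.1 * p1' - z.2 * β, z.1 * p2' + z.2 * α) with hιdef
  set ι' : ℤ × ℤ → ℤ × ℤ := fun u => (α * u.1 + β * u.2, p1' * u.2 - p2' * u.1) with hι'def
  have hadd : ∀ u v, ι (u + v) = ι u + ι v := by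
    intro u v
    simp only [hιdef]
    ext
    · dsimp; ring
    · dsimp; ring
  have hadd' : ∀ u v, ι' (u + v) = ι' u + ι' v := by
    intro u v
    simp only [hι'def]
    ext
    · dsimp; ring
    · dsimp; ring
  have hinv : ∀ u, ι (ι' u) = u := by
    intro u
    simp only [hιdef, hι'def]
    ext
    · dsimp; linear_combination u.1 * hbez
    · dsimp; linear_combination u.2 * hbez
  have hinv' : ∀ u, ι' (ι u) = u := by
    intro u
    simp only [hιdef, hι'def]
    ext
    · dsimp; linear_combination u.1 * hbez
    · dsimp; linear_combination u.2 * hbez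
  -- Step 5: transported data
  have hXt : IsSubshift (conj ι '' X) := conj_subshift hadd hinv hinv' hX
  have hct : Level1 (conj ι '' X) (conj ι c) := conj_level1 hadd hadd' hinv hinv' hc
  have hcountt : (conj ι '' X).Countable := hcount.image _
  have hpdt : shift (d, (0 : ℤ)) (conj ι c) = conj ι c := by
    have h1 : conj ι (shift p c) = shift (ι' p) (conj ι c) := conj_shift hadd hinv p c
    rw [hpper] at h1
    have h2 : ι' p = (d, (0 : ℤ)) := by
      simp only [hι'def]
      ext
      · dsimp; linear_combination hbez0.symm
      · dsimp; linear_combination p2' * hp1 - p1' * hp2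
    rw [h2] at h1
    exact h1.symm
  -- Step 6: isolation for the transported configuration
  obtain ⟨Dt, hisot⟩ := exists_isolating_window (conj ι c)
    (hcountt.mono (fun z hz => mem_of_preceq hXt (Set.mem_image_of_mem _ hc.1) hz))
  -- Step 7: one-sided eventual periodicity in both vertical directions
  obtain ⟨m₁, hm₁, t₁, hper₁⟩ := side_periodicity hXt hcountt hct hd hpdt hisot (Or.inl rfl)
  obtain ⟨m₂, hm₂, t₂, hper₂⟩ := side_periodicity hXt hcountt hct hd hpdt hisot (Or.inr rfl)
  -- Step 8: the two extension configurations
  obtain ⟨y₁, hy₁X, hy₁prec, hy₁agree⟩ := build_extension hXt hct hd hpdt (Or.inl rfl) hm₁ hper₁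
  obtain ⟨y₂, hy₂X, hy₂prec, hy₂agree⟩ := build_extension hXt hct hd hpdt (Or.inr rfl) hm₂ hper₂
  -- Step 9: map everything back
  have hback : ∀ z ∈ conj ι '' X, conj ι' z ∈ X := by
    rintro - ⟨x', hx', rfl⟩
    rwa [conj_conj hinv]
  have hprecback : ∀ z, Prec z (conj ι c) → Prec (conj ι' z) c := by
    intro z hz
    constructor
    · have := conj_preceq hadd' hinv' hz.1
      rwa [conj_conj hinv] at this
    · intro hcy
      apply hz.2
      have h1 := conj_preceq hadd hinv hcy
      rwa [conj_conj hinv' z] at h1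
  have hdot : ∀ u : ℤ × ℤ, dot u (-p2', p1') = (ι' u).2 := by
    intro u
    show u.1 * -p2' + u.2 * p1' = p1' * u.2 - p2' * u.1
    ring
  have hcu : ∀ u : ℤ × ℤ, c u = conj ι c (ι' u) := by
    intro u
    simp only [conj, hinv]
  have hw : ((-p2', p1') : ℤ × ℤ) ≠ 0 := by
    intro h
    apply hp0
    have h1 : p1' = 0 := by
      have := congrArg Prod.snd h
      simpa using this
    have h2 : p2' = 0 := by
      have := congrArg Prod.fst h
      simpa using this
    have hpe : p = (d * p1', d * p2') := by rw [hp1, hp2]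
    rw [hpe, h1, h2]
    simp
  refine ⟨conj ι' y₁, hback _ hy₁X, conj ι' y₂, hback _ hy₂X,
    hprecback _ hy₁prec, hprecback _ hy₂prec,
    (-p2', p1'), hw, min (-t₂) (max t₁ (-t₂)), max t₁ (-t₂), min_le_right _ _, ?_, ?_⟩
  · intro u hu
    rw [hdot u] at hu
    have h1 : t₁ ≤ 1 * (ι' u).2 := by
      rw [one_mul]
      have := le_max_left t₁ (-t₂)
      omega
    calc c u = conj ι c (ι' u) := hcu u
      _ = y₁ (ι' u) := hy₁agree (ι' u) h1
      _ = conj ι' y₁ u := rfl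
  · intro u hu
    rw [hdot u] at hu
    have h1 : t₂ ≤ -1 * (ι' u).2 := by
      have h2 := min_le_left (-t₂) (max t₁ (-t₂))
      omega
    calc c u = conj ι c (ι' u) := hcu u
      _ = y₂ (ι' u) := hy₂agree (ι' u) h1
      _ = conj ι' y₂ u := rfl

end CountableSubshift
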